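/- For every n ≥ 1, every h, g ∈ S_n, and every d ≥ 0, the number of strictly monotone sequences of transpositions (τ_1,…,τ_d) in S_n with τ_d ⋯ τ_1 h = g equals 1 if d = ℓ*(g h^{-1}) and equals 0 otherwise. In particular, for fixed h of cycle type μ, the number of strictly monotone d-step paths from h into the class cyc(ν) equals the number of σ ∈ S_n with ℓ*(σ) = d and σh ∈ cyc(ν). -/

import Mathlib

/-- For a transposition `τ = (a b)` with `a < b`, the "second element" `b`,
realized as the largest point moved by `τ`. -/
def bval {n : ℕ} (τ : Equiv.Perm (Fin n)) : ℕ :=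
  τ.support.sup fun x => (x : ℕ)

/-- The colength `ℓ*(σ) = n − c(σ)`, where `c(σ)` is the number of cycles of `σ`
(fixed points counted as cycles of length 1). -/
noncomputable def colength {n : ℕ} (σ : Equiv.Perm (Fin n)) : ℕ :=
  n - (σ.cycleType.card + (n - σ.support.card))

/-- The cycle type of a permutation of `Fin n`, including fixed points as parts equal to `1`. -/
noncomputable def fullCycleType {n : ℕ} (σ : Equiv.Perm (Fin n)) : Multiset ℕ :=
  σ.cycleType + Multiset.replicate (n - σ.support.card) 1

/-!
In a strictly monotone factorization `σ = τ_d ⋯ τ_1` with `τ_d = (a b)`, the transpositions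
`τ_1, …, τ_{d-1}` fix every point `≥ b`, so `b` is the largest point moved by `σ` and `a = σ b`.
Hence `τ_d` is determined by `σ`, and `τ_d σ` is `σ` with `b` split off its cycle, of colength
`ℓ*(σ) - 1`. Peeling off transpositions this way shows that every permutation has exactly one
strictly monotone factorization, of length `ℓ*(σ)`: the product map is a bijection from strictly
monotone `d`-sequences onto the permutations of colength `d`, and both counts follow.
-/

open Equiv Equiv.Perm

section bval

variable {n : ℕ} {σ : Perm (Fin n)}

lemma le_bval_of_apply_ne {x : Fin n} (h : σ x ≠ x) : (x : ℕ) ≤ bval σ :=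
  Finset.le_sup (f := fun x : Fin n => (x : ℕ)) (mem_support.2 h)

lemma bval_le_iff {k : ℕ} : bval σ ≤ k ↔ ∀ x : Fin n, k < x → σ x = x := by
  refine ⟨fun h x hx => ?_, fun h => Finset.sup_le fun x hx => ?_⟩
  · by_contra hσx
    exact (le_bval_of_apply_ne hσx).not_gt (h.trans_lt hx)
  · by_contra hkx
    exact mem_support.1 hx (h x (not_le.1 hkx))

lemma apply_eq_self_of_bval_lt {x : Fin n} (h : bval σ < x) : σ x = x :=
  bval_le_iff.1 le_rfl x h

lemma bval_swap {a b : Fin n} (hab : a < b) : bval (swap a b) = b := by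
  rw [bval, support_swap hab.ne, Finset.sup_insert, Finset.sup_singleton]
  exact max_eq_right hab.le

lemma Equiv.Perm.IsSwap.exists_lt_eq_swap (h : σ.IsSwap) :
    ∃ a b : Fin n, a < b ∧ σ = swap a b := by
  obtain ⟨x, y, hxy, rfl⟩ := h
  rcases hxy.lt_or_gt with hlt | hgt
  · exact ⟨x, y, hlt, rfl⟩
  · exact ⟨y, x, hgt, swap_comm x y⟩

end bval

section colength

variable {n : ℕ}

lemma card_cycleType_le_card_support {α : Type*} [Fintype α] [DecidableEq α] (σ : Perm α) :
    Multiset.card σ.cycleType ≤ σ.support.card := by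
  rw [← sum_cycleType]
  simpa using Multiset.card_nsmul_le_sum fun k hk => one_le_two.trans (two_le_of_mem_cycleType hk)

lemma colength_eq_card_support_sub (σ : Perm (Fin n)) :
    colength σ = σ.support.card - Multiset.card σ.cycleType := by
  have := σ.support.card_le_univ
  rw [colength, Fintype.card_fin] at *
  omega

lemma colength_one : colength (1 : Perm (Fin n)) = 0 := by
  simp [colength_eq_card_support_sub]

lemma Equiv.Perm.Disjoint.colength_mul {σ τ : Perm (Fin n)} (h : σ.Disjoint τ) :
    colength (σ * τ) = colength σ + colength τ := by
  have hσ := card_cycleType_le_card_support σ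
  have hτ := card_cycleType_le_card_support τ
  rw [colength_eq_card_support_sub, colength_eq_card_support_sub, colength_eq_card_support_sub,
    h.cycleType_mul, h.card_support_mul, Multiset.card_add]
  omega

lemma Equiv.Perm.IsCycle.colength_eq {c : Perm (Fin n)} (hc : c.IsCycle) :
    colength c = c.support.card - 1 := by
  rw [colength_eq_card_support_sub, card_cycleType_eq_one.2 hc]

lemma Equiv.Perm.IsCycle.colength_swap_mul {c : Perm (Fin n)} (hc : c.IsCycle) {x : Fin n}
    (hx : c x ≠ x) : colength (swap x (c x) * c) + 1 = colength c := by
  have h2 := hc.two_le_card_support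
  by_cases hcc : c (c x) = x
  · rw [hc.eq_swap_of_apply_apply_eq_self hx hcc, swap_apply_left, swap_mul_self, colength_one,
      (isCycle_swap hx.symm).colength_eq, card_support_swap hx.symm]
  · rw [(hc.swap_mul hx hcc).colength_eq, hc.colength_eq, support_swap_mul_eq c x hcc,
      Finset.card_sdiff_of_subset (by simpa using hx), Finset.card_singleton]
    omega

/-- Multiplying by `swap b (σ b)` shortens the cycle of `σ` through `b` by one. -/
lemma colength_swap_mul (σ : Perm (Fin n)) {b : Fin n} (hb : σ b ≠ b) :
    colength (swap b (σ b) * σ) + 1 = colength σ := by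
  set c := σ.cycleOf b
  have hc : c.IsCycle := σ.isCycle_cycleOf hb
  have hcb : c b = σ b := σ.cycleOf_apply_self b
  have hd : (σ * c⁻¹).Disjoint c :=
    disjoint_mul_inv_of_mem_cycleFactorsFinset <|
      cycleOf_mem_cycleFactorsFinset_iff.2 (mem_support.2 hb)
  have hswap : (swap b (c b)).support ⊆ c.support := by
    rw [support_swap (hcb ▸ hb).symm]
    simpa [Finset.insert_subset_iff] using (hcb ▸ hb : c b ≠ b)
  have hswap_mul : (swap b (c b) * c).support ⊆ c.support := fun y hy =>
    (mem_support_swap_mul_imp_mem_support_ne hy).1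
  have hσ : σ = σ * c⁻¹ * c := by group
  have hτσ : swap b (σ b) * σ = σ * c⁻¹ * (swap b (c b) * c) := by
    rw [← hcb]
    conv_lhs => rw [hσ]
    rw [← mul_assoc, ← (hd.mono le_rfl hswap).commute.eq, mul_assoc]
  rw [hτσ, (hd.mono le_rfl hswap_mul).colength_mul, add_assoc,
    hc.colength_swap_mul (hcb ▸ hb), ← hd.colength_mul, ← hσ]

end colength

lemma list_prod_apply_eq_self {α : Type*} {L : List (Perm α)} {x : α}
    (h : ∀ t ∈ L, t x = x) : L.prod x = x :=
  (MulAction.stabilizer (Perm α) x).list_prod_mem h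

/-- A strictly monotone sequence `τ_1, …, τ_d` is encoded as the list `[τ_d, …, τ_1]`, so that
its product is `τ_d ⋯ τ_1` and the `bval`s strictly decrease along it. -/
def IsDescendingSwapList {n : ℕ} (L : List (Perm (Fin n))) : Prop :=
  (∀ t ∈ L, t.IsSwap) ∧ L.Pairwise fun s t => bval t < bval s

namespace IsDescendingSwapList

variable {n : ℕ} {L : List (Perm (Fin n))}

lemma cons_iff {t : Perm (Fin n)} :
    IsDescendingSwapList (t :: L) ↔
      t.IsSwap ∧ (∀ s ∈ L, bval s < bval t) ∧ IsDescendingSwapList L := by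
  simp only [IsDescendingSwapList, List.forall_mem_cons, List.pairwise_cons]
  tauto

/-- The top transposition `(a b)` can be read off the product, since the remaining
transpositions fix every point `≥ b`. -/
lemma cons_swap_prod {a b : Fin n} (hab : a < b) (hL : IsDescendingSwapList (swap a b :: L)) :
    (swap a b * L.prod) b = a ∧ bval (swap a b * L.prod) = b := by
  have hfix : ∀ x : Fin n, b ≤ x → L.prod x = x := fun x hx =>
    list_prod_apply_eq_self fun t ht =>
      apply_eq_self_of_bval_lt <| ((cons_iff.1 hL).2.1 t ht).trans_le (by rwa [bval_swap hab])
  have hb : (swap a b * L.prod) b = a := by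
    rw [mul_apply, hfix b le_rfl, swap_apply_right]
  refine ⟨hb, le_antisymm (bval_le_iff.2 fun x hx => ?_) ?_⟩
  · rw [mul_apply, hfix x (le_of_lt hx)]
    exact swap_apply_of_ne_of_ne (ne_of_gt (hab.trans hx)) (ne_of_gt hx)
  · exact le_bval_of_apply_ne (by rw [hb]; exact hab.ne)

lemma cons_prod_ne_one {t : Perm (Fin n)} (hL : IsDescendingSwapList (t :: L)) :
    t * L.prod ≠ 1 := by
  obtain ⟨a, b, hab, rfl⟩ := (cons_iff.1 hL).1.exists_lt_eq_swap
  intro h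
  have := (cons_swap_prod hab hL).1
  rw [h, one_apply] at this
  exact hab.ne' this

lemma eq_of_prod_eq {L' : List (Perm (Fin n))} (hL : IsDescendingSwapList L)
    (hL' : IsDescendingSwapList L') (h : L.prod = L'.prod) : L = L' := by
  induction L generalizing L' with
  | nil =>
    cases L' with
    | nil => rfl
    | cons t' L' => exact absurd h.symm (by simpa using hL'.cons_prod_ne_one)
  | cons t L ih =>
    cases L' with
    | nil => exact absurd h (by simpa using hL.cons_prod_ne_one)
    | cons t' L' =>
      obtain ⟨a, b, hab, rfl⟩ := (cons_iff.1 hL).1.exists_lt_eq_swap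
      obtain ⟨a', b', hab', rfl⟩ := (cons_iff.1 hL').1.exists_lt_eq_swap
      rw [List.prod_cons, List.prod_cons] at h
      obtain ⟨ha, hb⟩ := cons_swap_prod hab hL
      obtain ⟨ha', hb'⟩ := cons_swap_prod hab' hL'
      obtain rfl : b = b' := Fin.ext (hb.symm.trans (h ▸ hb'))
      obtain rfl : a = a' := ha.symm.trans (h ▸ ha')
      rw [ih (cons_iff.1 hL).2.2 (cons_iff.1 hL').2.2 (mul_left_cancel h)]

lemma colength_prod (hL : IsDescendingSwapList L) : colength L.prod = L.length := by
  induction L with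
  | nil => exact colength_one
  | cons t L ih =>
    obtain ⟨a, b, hab, rfl⟩ := (cons_iff.1 hL).1.exists_lt_eq_swap
    have hb := (cons_swap_prod hab hL).1
    have := colength_swap_mul (swap a b * L.prod) (b := b) (by rw [hb]; exact hab.ne)
    rw [hb, ← mul_assoc, swap_comm, swap_mul_self, one_mul, ih (cons_iff.1 hL).2.2] at this
    rw [List.prod_cons, ← this, List.length_cons]

end IsDescendingSwapList

/-- Induction on the bound `k`: if `σ` moves the point `k`, then `σ k < k` and peeling off the
transposition `(σ k, k)` leaves a permutation fixing every point `≥ k`. -/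
lemma exists_isDescendingSwapList_of_forall_le_apply_eq {n : ℕ} (k : ℕ) :
    ∀ σ : Perm (Fin n), (∀ x : Fin n, k ≤ x → σ x = x) →
      ∃ L, IsDescendingSwapList L ∧ L.prod = σ ∧ ∀ t ∈ L, bval t < k := by
  induction k with
  | zero =>
    intro σ hσ
    obtain rfl : σ = 1 := Equiv.ext fun x => hσ x (Nat.zero_le _)
    exact ⟨[], ⟨by simp, List.Pairwise.nil⟩, rfl, by simp⟩
  | succ k ih =>
    intro σ hσ
    by_cases hkn : n ≤ k
    · obtain ⟨L, hL, hprod, hbval⟩ := ih σ fun x hx => absurd (x.2.trans_le hkn) (not_lt.2 hx)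
      exact ⟨L, hL, hprod, fun t ht => (hbval t ht).trans (Nat.lt_succ_self k)⟩
    set b : Fin n := ⟨k, not_le.1 hkn⟩
    have hfix : ∀ x : Fin n, b < x → σ x = x := fun x hx => hσ x hx
    by_cases hb : σ b = b
    · obtain ⟨L, hL, hprod, hbval⟩ := ih σ fun x hx =>
        (eq_or_lt_of_le (show b ≤ x from hx)).elim (fun h => h ▸ hb) (hfix x)
      exact ⟨L, hL, hprod, fun t ht => (hbval t ht).trans (Nat.lt_succ_self k)⟩
    have hσb : σ b < b := by
      refine lt_of_le_of_ne (not_lt.1 fun hlt => hb ?_) hb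
      exact σ.injective (hfix _ hlt)
    obtain ⟨L, hL, hprod, hbval⟩ := ih (swap (σ b) b * σ) fun x hx => by
      rcases eq_or_lt_of_le (show b ≤ x from hx) with rfl | hlt
      · rw [mul_apply, swap_apply_left]
      · rw [mul_apply, hfix x hlt]
        exact swap_apply_of_ne_of_ne (hσb.trans hlt).ne' hlt.ne'
    refine ⟨swap (σ b) b :: L, ?_, ?_, ?_⟩
    · refine IsDescendingSwapList.cons_iff.2 ⟨⟨σ b, b, hσb.ne, rfl⟩, fun t ht => ?_, hL⟩
      rw [bval_swap hσb]
      exact hbval t ht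
    · rw [List.prod_cons, hprod, ← mul_assoc, swap_mul_self, one_mul]
    · simp only [List.mem_cons, forall_eq_or_imp, bval_swap hσb]
      exact ⟨Nat.lt_succ_self k, fun t ht => (hbval t ht).trans (Nat.lt_succ_self k)⟩

lemma exists_isDescendingSwapList_prod_eq {n : ℕ} (σ : Perm (Fin n)) :
    ∃ L, IsDescendingSwapList L ∧ L.prod = σ := by
  obtain ⟨L, hL, hprod, -⟩ :=
    exists_isDescendingSwapList_of_forall_le_apply_eq n σ fun x hx => absurd x.2 (not_lt.2 hx)
  exact ⟨L, hL, hprod⟩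

lemma isDescendingSwapList_reverse_ofFn_iff {n d : ℕ} {τ : Fin d → Perm (Fin n)} :
    IsDescendingSwapList (List.ofFn τ).reverse ↔
      (∀ m, (τ m).IsSwap) ∧ StrictMono fun m => bval (τ m) := by
  simp [IsDescendingSwapList, List.pairwise_reverse, List.pairwise_ofFn, StrictMono]

theorem card_strictMono_swaps_prod {n d : ℕ} (P : Perm (Fin n) → Prop) :
    Nat.card {τ : Fin d → Perm (Fin n) //
        (∀ m, (τ m).IsSwap) ∧ StrictMono (fun m => bval (τ m)) ∧ P (List.ofFn τ).reverse.prod} =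
      Nat.card {σ : Perm (Fin n) // colength σ = d ∧ P σ} := by
  refine Nat.card_congr (Equiv.ofBijective
    (fun τ => ⟨(List.ofFn τ.1).reverse.prod, ?_, τ.2.2.2⟩) ⟨?_, ?_⟩)
  · rw [(isDescendingSwapList_reverse_ofFn_iff.2 ⟨τ.2.1, τ.2.2.1⟩).colength_prod]
    simp
  · intro τ τ' hprod
    have := (isDescendingSwapList_reverse_ofFn_iff.2 ⟨τ.2.1, τ.2.2.1⟩).eq_of_prod_eq
      (isDescendingSwapList_reverse_ofFn_iff.2 ⟨τ'.2.1, τ'.2.2.1⟩) (congrArg Subtype.val hprod)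
    exact Subtype.ext (List.ofFn_injective (List.reverse_injective this))
  · rintro ⟨σ, rfl, hP⟩
    obtain ⟨L, hL, rfl⟩ := exists_isDescendingSwapList_prod_eq σ
    obtain ⟨τ, hτ⟩ : ∃ τ : Fin (colength L.prod) → Perm (Fin n), List.ofFn τ = L.reverse := by
      rw [hL.colength_prod, ← List.length_reverse]
      exact ⟨_, List.ofFn_getElem⟩
    obtain ⟨hs, hm⟩ := isDescendingSwapList_reverse_ofFn_iff.1 (by rwa [hτ, List.reverse_reverse])
    exact ⟨⟨τ, hs, hm, by rwa [hτ, List.reverse_reverse]⟩, Subtype.ext (by simp [hτ])⟩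

theorem strictly_monotone_path_count_general (n : ℕ) (h g : Equiv.Perm (Fin n))
    (d : ℕ) :
    (Nat.card {τ : Fin d → Equiv.Perm (Fin n) //
        (∀ m, (τ m).IsSwap) ∧
        StrictMono (fun m => bval (τ m)) ∧
        (List.ofFn τ).reverse.prod * h = g} =
      if d = colength (g * h⁻¹) then 1 else 0) ∧
    ∀ ν : Nat.Partition n,
      Nat.card {τ : Fin d → Equiv.Perm (Fin n) //
          (∀ m, (τ m).IsSwap) ∧
          StrictMono (fun m => bval (τ m)) ∧
          fullCycleType ((List.ofFn τ).reverse.prod * h) = ν.parts} =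
        Nat.card {σ : Equiv.Perm (Fin n) //
          colength σ = d ∧ fullCycleType (σ * h) = ν.parts} := by
  refine ⟨?_, fun ν => card_strictMono_swaps_prod (fun σ => fullCycleType (σ * h) = ν.parts)⟩
  rw [card_strictMono_swaps_prod (· * h = g)]
  split_ifs with hd
  · rw [Nat.card_eq_one_iff_exists]
    exact ⟨⟨g * h⁻¹, hd.symm, inv_mul_cancel_right g h⟩,
      fun ⟨σ, _, hσ⟩ => Subtype.ext (eq_mul_inv_of_mul_eq hσ)⟩
  · have : IsEmpty {σ : Perm (Fin n) // colength σ = d ∧ σ * h = g} :=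
      ⟨fun ⟨σ, hσd, hσ⟩ => hd (by rw [← eq_mul_inv_of_mul_eq hσ, hσd])⟩
    exact Nat.card_of_isEmpty

/-- for every `n ≥ 1`, `h, g ∈ S_n` and `d ≥ 0`, the number of strictly
monotone sequences of transpositions `(τ_1,…,τ_d)` with `τ_d ⋯ τ_1 h = g` equals `1` if
`d = ℓ*(g h⁻¹)` and `0` otherwise.  In particular, for fixed `h`, the number of strictly
monotone `d`-step paths from `h` into the class `cyc(ν)` equals the number of `σ ∈ S_n`
with `ℓ*(σ) = d` and `σ h ∈ cyc(ν)`. -/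
theorem strictly_monotone_path_count (n : ℕ) (hn : 1 ≤ n) (h g : Equiv.Perm (Fin n))
    (d : ℕ) :
    (Nat.card {τ : Fin d → Equiv.Perm (Fin n) //
        (∀ m, (τ m).IsSwap) ∧
        StrictMono (fun m => bval (τ m)) ∧
        (List.ofFn τ).reverse.prod * h = g} =
      if d = colength (g * h⁻¹) then 1 else 0) ∧
    ∀ ν : Nat.Partition n,
      Nat.card {τ : Fin d → Equiv.Perm (Fin n) //
          (∀ m, (τ m).IsSwap) ∧
          StrictMono (fun m => bval (τ m)) ∧
          fullCycleType ((List.ofFn τ).reverse.prod * h) = ν.parts} =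
        Nat.card {σ : Equiv.Perm (Fin n) //
          colength σ = d ∧ fullCycleType (σ * h) = ν.parts} :=
  strictly_monotone_path_count_general n h g d
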